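/- For every i ≥ 1 and every x ∈ A_i^+ + Q(ℓ_i, r_i), one has |x − C_i^-|² − |x − C_i^+|² = 4 r_i (x₁ − u_i) + 4 w_i x₂ > 0; in particular x is strictly closer to C_i^+ than to C_i^-. Symmetrically, every x ∈ A_i^- − Q(ℓ_i, r_i) is strictly closer to C_i^- than to C_i^+. -/

import Mathlib

/-! The squared distances to `C⁺ = (u + r, w, 0, …)` and `C⁻ = (u - r, -w, 0, …)` differ by the
affine function `4 r (x₁ - u) + 4 w x₂`, whose zero set is the bisecting hyperplane. On
`A⁺ + Q(ℓ, r)` one has `x₁ - u > w` and `x₂ > -r/2`, so the function exceeds `4rw - 2rw > 0`;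
on `A⁻ - Q(ℓ, r)` the same bounds with reversed signs make it negative. -/

theorem dist_lt_dist_iff_sq_sub_pos {α : Type*} [PseudoMetricSpace α] (x a b : α) :
    dist x b < dist x a ↔ 0 < dist x a ^ 2 - dist x b ^ 2 := by
  rw [sub_pos, pow_lt_pow_iff_left₀ dist_nonneg dist_nonneg two_ne_zero]

namespace EuclideanSpace

variable {ι : Type*} [Fintype ι] [DecidableEq ι]

theorem dist_sq_sub_dist_sq_single_add_single {i j : ι} (hij : i ≠ j)
    (x : EuclideanSpace ℝ ι) (u r w : ℝ) :
    dist x (single i (u - r) - single j w) ^ 2 - dist x (single i (u + r) + single j w) ^ 2 =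
      4 * r * (x i - u) + 4 * w * x j := by
  simp only [dist_sq_eq, Real.dist_eq, sq_abs]
  rw [← Finset.sum_sub_distrib, Fintype.sum_eq_add i j hij]
  · simp [hij, hij.symm]
    ring
  · rintro k ⟨hki, hkj⟩
    simp [hki, hkj]

end EuclideanSpace

/-- For every `x ∈ A_i^+ + Q(ℓ_i, r_i)` one has
`|x - C_i^-|² - |x - C_i^+|² = 4 r_i (x₁ - u_i) + 4 w_i x₂ > 0`, so `x` is strictly
closer to `C_i^+` than to `C_i^-`; symmetrically, every `x ∈ A_i^- - Q(ℓ_i, r_i)` is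
strictly closer to `C_i^-` than to `C_i^+`. -/
theorem stmt12 (d : ℕ) (hd : 2 ≤ d)
    (ℓ r w u : ℕ → ℝ)
    (hr : ∀ i, 0 < r i) (hw : ∀ i, 0 < w i)
    (Q : ℝ → ℝ → Set (EuclideanSpace ℝ (Fin d)))
    (hQ : ∀ L R : ℝ, Q L R = {x : EuclideanSpace ℝ (Fin d) |
      0 < x ⟨0, by omega⟩ ∧ x ⟨0, by omega⟩ < L ∧ |x ⟨1, by omega⟩| < R / 2 ∧
      ∀ j : Fin d, 2 ≤ (j : ℕ) → |x j| < 1 / 2})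
    (Ap Am Cp Cm : ℕ → EuclideanSpace ℝ (Fin d))
    (hAp : ∀ i, Ap i = EuclideanSpace.single (⟨0, by omega⟩ : Fin d) (u i + w i))
    (hAm : ∀ i, Am i = EuclideanSpace.single (⟨0, by omega⟩ : Fin d) (u i - w i))
    (hCp : ∀ i, Cp i = EuclideanSpace.single (⟨0, by omega⟩ : Fin d) (u i + r i) +
      EuclideanSpace.single (⟨1, by omega⟩ : Fin d) (w i))
    (hCm : ∀ i, Cm i = EuclideanSpace.single (⟨0, by omega⟩ : Fin d) (u i - r i) -
      EuclideanSpace.single (⟨1, by omega⟩ : Fin d) (w i))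
    (i : ℕ) (x : EuclideanSpace ℝ (Fin d)) :
    (x ∈ (fun q => Ap i + q) '' Q (ℓ i) (r i) →
      dist x (Cm i) ^ 2 - dist x (Cp i) ^ 2 =
        4 * r i * (x ⟨0, by omega⟩ - u i) + 4 * w i * x ⟨1, by omega⟩ ∧
      0 < 4 * r i * (x ⟨0, by omega⟩ - u i) + 4 * w i * x ⟨1, by omega⟩ ∧
      dist x (Cp i) < dist x (Cm i)) ∧
    (x ∈ (fun q => Am i - q) '' Q (ℓ i) (r i) →
      dist x (Cm i) < dist x (Cp i)) := by
  have h01 : (⟨0, by omega⟩ : Fin d) ≠ ⟨1, by omega⟩ := by simp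
  have dist_sq_diff : ∀ y : EuclideanSpace ℝ (Fin d), dist y (Cm i) ^ 2 - dist y (Cp i) ^ 2 =
      4 * r i * (y ⟨0, by omega⟩ - u i) + 4 * w i * y ⟨1, by omega⟩ := fun y => by
    rw [hCm, hCp]
    exact EuclideanSpace.dist_sq_sub_dist_sq_single_add_single h01 y _ _ _
  have bounds : ∀ q ∈ Q (ℓ i) (r i), 0 < q ⟨0, by omega⟩ ∧ 0 < r i / 2 + q ⟨1, by omega⟩ := by
    intro q hq
    rw [hQ] at hq
    exact ⟨hq.1, neg_lt_iff_pos_add'.1 (abs_lt.1 hq.2.2.1).1⟩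
  constructor
  · rintro ⟨q, hq, rfl⟩
    obtain ⟨hq₀, hq₁⟩ := bounds q hq
    have hpos : 0 < 4 * r i * ((Ap i + q) ⟨0, by omega⟩ - u i) +
        4 * w i * (Ap i + q) ⟨1, by omega⟩ := by
      simp [hAp]
      nlinarith [mul_pos (hr i) (hw i), mul_pos (hw i) hq₁, mul_pos (hr i) hq₀]
    exact ⟨dist_sq_diff _, hpos, (dist_lt_dist_iff_sq_sub_pos _ _ _).2 (dist_sq_diff _ ▸ hpos)⟩
  · rintro ⟨q, hq, rfl⟩
    obtain ⟨hq₀, hq₁⟩ := bounds q hq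
    have hneg : 4 * r i * ((Am i - q) ⟨0, by omega⟩ - u i) +
        4 * w i * (Am i - q) ⟨1, by omega⟩ < 0 := by
      simp [hAm]
      nlinarith [mul_pos (hr i) (hw i), mul_pos (hw i) hq₁, mul_pos (hr i) hq₀]
    exact (dist_lt_dist_iff_sq_sub_pos _ _ _).2 (by linarith [dist_sq_diff (Am i - q)])
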